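/- Let P be a finite poset, φ : P → P a monotone map, and Q a subset with Fix φ ⊆ Q ⊆ P. Then Δ(P) NE-reduces to Δ(Q); in particular Δ(P) collapses onto Δ(Q). -/
import Mathlib


/-- An abstract simplicial complex on a vertex type `V`: a collection of
nonempty finite subsets of `V` closed under passing to nonempty subsets. -/
structure SComplex (V : Type*) where
  faces : Set (Finset V)
  nonempty_of_mem : ∀ σ ∈ faces, σ.Nonempty
  down_closed : ∀ σ ∈ faces, ∀ τ ⊆ σ, τ.Nonempty → τ ∈ faces

namespace SComplex

variable {V W : Type*}

/-- Deletion of a vertex: all faces not containing `v`. -/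
def del (X : SComplex V) (v : V) : SComplex V where
  faces := {σ ∈ X.faces | v ∉ σ}
  nonempty_of_mem := fun σ h => X.nonempty_of_mem σ h.1
  down_closed := fun σ h τ hτ hne =>
    ⟨X.down_closed σ h.1 τ hτ hne, fun hv => h.2 (hτ hv)⟩

/-- The link of a vertex `v`: faces `σ` avoiding `v` with `σ ∪ {v}` a face. -/
def link [DecidableEq V] (X : SComplex V) (v : V) : SComplex V where
  faces := {σ | v ∉ σ ∧ σ.Nonempty ∧ insert v σ ∈ X.faces}
  nonempty_of_mem := fun _ h => h.2.1
  down_closed := fun σ h τ hτ hne =>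
    ⟨fun hv => h.1 (hτ hv), hne,
      X.down_closed _ h.2.2 _ (Finset.insert_subset_insert v hτ)
        ⟨v, Finset.mem_insert_self v _⟩⟩

/-- The one-point complex on the vertex `v`. -/
def point (v : V) : SComplex V where
  faces := {{v}}
  nonempty_of_mem := fun σ h => by
    simp only [Set.mem_singleton_iff] at h; subst h; exact Finset.singleton_nonempty v
  down_closed := fun σ h τ hτ hne => by
    simp only [Set.mem_singleton_iff] at h ⊢
    subst h
    exact Finset.Subset.antisymm hτ
      (Finset.singleton_subset_iff.2 (by
        obtain ⟨x, hx⟩ := hne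
        have := Finset.mem_singleton.1 (hτ hx)
        subst this; exact hx))

/-- Nonevasiveness, defined recursively: a point is nonevasive, and `X` is
nonevasive if some vertex `v` has both the deletion `X \ {v}` and the link
`lk_X v` nonevasive. -/
inductive Nonevasive [DecidableEq V] : SComplex V → Prop where
  | point (X : SComplex V) (v : V) (h : X.faces = {({v} : Finset V)}) : Nonevasive X
  | step (X : SComplex V) (v : V) (hv : ({v} : Finset V) ∈ X.faces)
      (hdel : Nonevasive (X.del v)) (hlink : Nonevasive (X.link v)) : Nonevasive X

/-- `NERed X Y` (`X ↘_NE Y`): `Y` is obtained from `X` by successively deleting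
vertices whose links are nonevasive. -/
inductive NERed [DecidableEq V] : SComplex V → SComplex V → Prop where
  | refl (X : SComplex V) : NERed X X
  | step (X Y : SComplex V) (v : V) (hv : ({v} : Finset V) ∈ X.faces)
      (hlink : Nonevasive (X.link v)) (h : NERed (X.del v) Y) : NERed X Y

/-- An elementary collapse: removal of a free pair `τ ⊂ σ` with
`dim σ = dim τ + 1` and `σ` the unique face properly containing `τ`. -/
def IsElemCollapse (X Y : SComplex V) : Prop :=
  ∃ σ τ : Finset V, σ ∈ X.faces ∧ τ ∈ X.faces ∧ τ ⊂ σ ∧ σ.card = τ.card + 1 ∧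
    (∀ ρ ∈ X.faces, τ ⊂ ρ → ρ = σ) ∧ Y.faces = X.faces \ {σ, τ}

/-- `Collapses X Y`: `X` collapses onto `Y` by a sequence of elementary collapses. -/
inductive Collapses : SComplex V → SComplex V → Prop where
  | refl (X : SComplex V) : Collapses X X
  | step (X Z Y : SComplex V) (h : IsElemCollapse X Z) (h' : Collapses Z Y) :
      Collapses X Y

/-- The simplicial join of two complexes. -/
def join [DecidableEq V] [DecidableEq W] (X : SComplex V) (Y : SComplex W) :
    SComplex (V ⊕ W) where
  faces := {ρ | ρ.Nonempty ∧ ∃ (σ : Finset V) (τ : Finset W),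
      (σ ∈ X.faces ∨ σ = ∅) ∧ (τ ∈ Y.faces ∨ τ = ∅) ∧
      ρ = σ.image Sum.inl ∪ τ.image Sum.inr}
  nonempty_of_mem := fun _ h => h.1
  down_closed := by
    rintro ρ ⟨-, σ, τ, hσ, hτ, rfl⟩ ρ' hsub hne
    classical
    refine ⟨hne, σ.filter (fun a => Sum.inl a ∈ ρ'), τ.filter (fun b => Sum.inr b ∈ ρ'),
      ?_, ?_, ?_⟩
    · rcases (σ.filter (fun a => Sum.inl a ∈ ρ')).eq_empty_or_nonempty with h | h
      · exact Or.inr h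
      · rcases hσ with hσ | rfl
        · exact Or.inl (X.down_closed σ hσ _ (Finset.filter_subset _ _) h)
        · simp at h
    · rcases (τ.filter (fun b => Sum.inr b ∈ ρ')).eq_empty_or_nonempty with h | h
      · exact Or.inr h
      · rcases hτ with hτ | rfl
        · exact Or.inl (Y.down_closed τ hτ _ (Finset.filter_subset _ _) h)
        · simp at h
    · ext z
      cases z with
      | inl a =>
        constructor
        · intro hz
          have := hsub hz
          simp only [Finset.mem_union, Finset.mem_image] at this ⊢
          refine Or.inl ⟨a, ?_, rfl⟩
          simp only [Finset.mem_filter]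
          rcases this with ⟨a', ha', he⟩ | ⟨b', _, he⟩
          · cases he; exact ⟨ha', hz⟩
          · cases he
        · intro hz
          simp only [Finset.mem_union, Finset.mem_image, Finset.mem_filter] at hz
          rcases hz with ⟨a', ⟨_, hmem⟩, he⟩ | ⟨b', _, he⟩
          · cases he; exact hmem
          · cases he
      | inr b =>
        constructor
        · intro hz
          have := hsub hz
          simp only [Finset.mem_union, Finset.mem_image] at this ⊢
          refine Or.inr ⟨b, ?_, rfl⟩
          simp only [Finset.mem_filter]
          rcases this with ⟨a', _, he⟩ | ⟨b', hb', he⟩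
          · cases he
          · cases he; exact ⟨hb', hz⟩
        · intro hz
          simp only [Finset.mem_union, Finset.mem_image, Finset.mem_filter] at hz
          rcases hz with ⟨a', _, he⟩ | ⟨b', ⟨_, hmem⟩, he⟩
          · cases he
          · cases he; exact hmem

end SComplex

/-- The order complex of a subset `Q` of a poset `P`: simplices are the
nonempty finite chains contained in `Q`. -/
def orderComplexOn (P : Type*) [PartialOrder P] (Q : Set P) : SComplex P where
  faces := {σ | σ.Nonempty ∧ (∀ x ∈ σ, x ∈ Q) ∧ ∀ x ∈ σ, ∀ y ∈ σ, x ≤ y ∨ y ≤ x}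
  nonempty_of_mem := fun _ h => h.1
  down_closed := fun σ h τ hτ hne =>
    ⟨hne, fun x hx => h.2.1 x (hτ hx), fun x hx y hy => h.2.2 x (hτ hx) y (hτ hy)⟩

/-- A map `φ : P → P` on a poset is a *monotone poset map* if it is
order-preserving and for every `x`, either `x ≤ φ x` or `φ x ≤ x`. -/
def IsMonotonePosetMap {P : Type*} [PartialOrder P] (φ : P → P) : Prop :=
  Monotone φ ∧ ∀ x : P, x ≤ φ x ∨ φ x ≤ x


namespace SComplex

variable {V : Type*}

lemma ext' {X Y : SComplex V} (h : X.faces = Y.faces) : X = Y := by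
  cases X; cases Y; cases h; rfl

lemma collapses_trans {X Y Z : SComplex V} (h1 : Collapses X Y) (h2 : Collapses Y Z) :
    Collapses X Z := by
  induction h1 with
  | refl => exact h2
  | step X Z' Y h h' ih => exact Collapses.step _ _ _ h (ih h2)

end SComplex
namespace SComplex

variable {V : Type*} [DecidableEq V]

lemma link_mem_iff (X : SComplex V) (v : V) (σ : Finset V) :
    σ ∈ (X.link v).faces ↔ v ∉ σ ∧ σ.Nonempty ∧ insert v σ ∈ X.faces := Iff.rfl

lemma del_mem_iff (X : SComplex V) (v : V) (σ : Finset V) :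
    σ ∈ (X.del v).faces ↔ σ ∈ X.faces ∧ v ∉ σ := Iff.rfl

lemma elemCollapse_of_link {X L : SComplex V} {v : V}
    (hel : IsElemCollapse (X.link v) L) :
    ∃ X' : SComplex V, IsElemCollapse X X' ∧ X'.del v = X.del v ∧ X'.link v = L := by
  obtain ⟨σ, τ, hσ, hτ, hsub, hcard, huniq, hfaces⟩ := hel
  rw [link_mem_iff] at hσ hτ
  obtain ⟨hvσ, hσne, hσX⟩ := hσ
  obtain ⟨hvτ, hτne, hτX⟩ := hτ
  -- uniqueness lifted to X
  have key : ∀ ρ ∈ X.faces, insert v τ ⊂ ρ → ρ = insert v σ := by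
    intro ρ hρ hlt
    have hvρ : v ∈ ρ := hlt.1 (Finset.mem_insert_self v τ)
    have hτρ : τ ⊆ ρ.erase v := by
      intro a ha
      exact Finset.mem_erase.2 ⟨fun h => hvτ (h ▸ ha),
        hlt.1 (Finset.mem_insert_of_mem ha)⟩
    have hμ : ρ.erase v ∈ (X.link v).faces := by
      rw [link_mem_iff]
      refine ⟨Finset.notMem_erase v ρ, hτne.mono hτρ, ?_⟩
      rw [Finset.insert_erase hvρ]; exact hρ
    have hne : τ ≠ ρ.erase v := by
      intro h
      exact hlt.ne (by rw [h, Finset.insert_erase hvρ])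
    have := huniq (ρ.erase v) hμ (ssubset_of_subset_of_ne hτρ hne)
    rw [← this, Finset.insert_erase hvρ]
  have hins_sub : insert v τ ⊂ insert v σ := by
    refine ⟨Finset.insert_subset_insert v hsub.1, fun hrev => ?_⟩
    have h1 : (insert v σ).card = σ.card + 1 := Finset.card_insert_of_notMem hvσ
    have h2 : (insert v τ).card = τ.card + 1 := Finset.card_insert_of_notMem hvτ
    have := Finset.card_le_card hrev
    omega
  refine ⟨⟨X.faces \ {insert v σ, insert v τ},
      fun ρ h => X.nonempty_of_mem ρ h.1, ?_⟩, ?_, ?_, ?_⟩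
  · -- down closed
    rintro ρ ⟨hρX, hρne⟩ μ hμρ hμne
    refine ⟨X.down_closed ρ hρX μ hμρ hμne, ?_⟩
    simp only [Set.mem_insert_iff, Set.mem_singleton_iff] at hρne ⊢
    push_neg at hρne ⊢
    constructor
    · rintro rfl
      have : insert v τ ⊂ ρ := hins_sub.trans_subset hμρ
      exact hρne.1 (key ρ hρX this)
    · rintro rfl
      rcases hμρ.ssubset_or_eq with hss | rfl
      · exact hρne.1 (key ρ hρX hss)
      · exact hρne.2 rfl
  · -- is elem collapse
    refine ⟨insert v σ, insert v τ, hσX, hτX, hins_sub, ?_, key, rfl⟩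
    rw [Finset.card_insert_of_notMem hvσ, Finset.card_insert_of_notMem hvτ, hcard]
  · -- del equal
    apply ext'
    ext ρ
    simp only [del_mem_iff]
    constructor
    · rintro ⟨⟨h1, _⟩, h2⟩; exact ⟨h1, h2⟩
    · rintro ⟨h1, h2⟩
      refine ⟨⟨h1, ?_⟩, h2⟩
      simp only [Set.mem_insert_iff, Set.mem_singleton_iff]
      push_neg
      constructor
      · rintro rfl; exact h2 (Finset.mem_insert_self v σ)
      · rintro rfl; exact h2 (Finset.mem_insert_self v τ)
  · -- link equal
    apply ext'
    rw [hfaces]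
    ext μ
    simp only [link_mem_iff, Set.mem_diff, Set.mem_insert_iff, Set.mem_singleton_iff]
    constructor
    · rintro ⟨hvμ, hμne, hins, hnotin⟩
      push_neg at hnotin
      refine ⟨⟨hvμ, hμne, hins⟩, ?_⟩
      push_neg
      constructor
      · rintro rfl; exact hnotin.1 rfl
      · rintro rfl; exact hnotin.2 rfl
    · rintro ⟨⟨hvμ, hμne, hins⟩, hne⟩
      push_neg at hne
      refine ⟨hvμ, hμne, hins, ?_⟩
      push_neg
      constructor
      · intro h
        apply hne.1
        have := congrArg (fun s => Finset.erase s v) h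
        simpa [Finset.erase_insert hvμ, Finset.erase_insert hvσ] using this
      · intro h
        apply hne.2
        have := congrArg (fun s => Finset.erase s v) h
        simpa [Finset.erase_insert hvμ, Finset.erase_insert hvτ] using this

end SComplex
namespace SComplex

variable {V : Type*} [DecidableEq V]

lemma collapses_of_link_collapses {Lk L : SComplex V} (hc : Collapses Lk L) :
    ∀ (X : SComplex V) (v : V), X.link v = Lk →
      ∃ X' : SComplex V, Collapses X X' ∧ X'.del v = X.del v ∧ X'.link v = L := by
  induction hc with
  | refl Z => exact fun X v h => ⟨X, Collapses.refl X, rfl, h⟩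
  | step Lk Z L hel hcoll ih =>
    intro X v hlink
    obtain ⟨X₁, hX₁, hdel₁, hlink₁⟩ := elemCollapse_of_link (hlink ▸ hel)
    obtain ⟨X', hX', hdel', hlink'⟩ := ih X₁ v hlink₁
    exact ⟨X', Collapses.step _ _ _ hX₁ hX', hdel'.trans hdel₁, hlink'⟩

lemma collapses_del_of_link {X : SComplex V} {v : V} {w : V}
    (h : Collapses (X.link v) (point w)) : Collapses X (X.del v) := by
  obtain ⟨X', hc, hdel, hlink⟩ := collapses_of_link_collapses h X v rfl
  -- the link of v in X' is the point {w}
  have hlinkfaces : (X'.link v).faces = {({w} : Finset V)} := by rw [hlink]; rfl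
  have hwmem : ({w} : Finset V) ∈ (X'.link v).faces := by rw [hlinkfaces]; rfl
  rw [link_mem_iff] at hwmem
  obtain ⟨hvw, -, hvwX⟩ := hwmem
  have hwv : w ≠ v := fun h => hvw (h ▸ Finset.mem_singleton_self w)
  have hvX : ({v} : Finset V) ∈ X'.faces := by
    refine X'.down_closed _ hvwX {v} ?_ (Finset.singleton_nonempty v)
    intro a ha
    rw [Finset.mem_singleton] at ha
    exact ha ▸ Finset.mem_insert_self v {w}
  have hel : IsElemCollapse X' (X'.del v) := by
    refine ⟨insert v {w}, {v}, hvwX, hvX, ?_, ?_, ?_, ?_⟩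
    · constructor
      · intro a ha
        rw [Finset.mem_singleton] at ha
        exact ha ▸ Finset.mem_insert_self v {w}
      · intro hrev
        have := hrev (Finset.mem_insert_of_mem (Finset.mem_singleton_self w))
        rw [Finset.mem_singleton] at this
        exact hwv this
    · rw [Finset.card_insert_of_notMem hvw, Finset.card_singleton, Finset.card_singleton]
    · intro ρ hρ hlt
      have hvρ : v ∈ ρ := hlt.1 (Finset.mem_singleton_self v)
      have hμ : ρ.erase v ∈ (X'.link v).faces := by
        rw [link_mem_iff]
        refine ⟨Finset.notMem_erase v ρ, ?_, by rw [Finset.insert_erase hvρ]; exact hρ⟩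
        obtain ⟨a, haρ, hane⟩ := Finset.exists_of_ssubset hlt
        rw [Finset.mem_singleton] at hane
        exact ⟨a, Finset.mem_erase.2 ⟨hane, haρ⟩⟩
      rw [hlinkfaces, Set.mem_singleton_iff] at hμ
      rw [← hμ, Finset.insert_erase hvρ]
    · ext ρ
      simp only [del_mem_iff, Set.mem_diff, Set.mem_insert_iff, Set.mem_singleton_iff]
      constructor
      · rintro ⟨h1, h2⟩
        refine ⟨h1, ?_⟩
        push_neg
        exact ⟨fun h => h2 (h ▸ Finset.mem_insert_self v {w}),
          fun h => h2 (h ▸ Finset.mem_singleton_self v)⟩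
      · rintro ⟨h1, h2⟩
        push_neg at h2
        refine ⟨h1, fun hvρ => ?_⟩
        by_cases hρv : ρ = {v}
        · exact h2.2 hρv
        · have hμ : ρ.erase v ∈ (X'.link v).faces := by
            rw [link_mem_iff]
            refine ⟨Finset.notMem_erase v ρ, ?_, by rw [Finset.insert_erase hvρ]; exact h1⟩
            rcases Finset.eq_empty_or_nonempty (ρ.erase v) with he | hne
            · exfalso
              apply hρv
              apply Finset.Subset.antisymm
              · intro a ha
                rw [Finset.mem_singleton]
                by_contra hav
                exact absurd (Finset.mem_erase.2 ⟨hav, ha⟩) (he ▸ Finset.notMem_empty a)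
              · intro a ha
                rw [Finset.mem_singleton] at ha
                exact ha ▸ hvρ
            · exact hne
          rw [hlinkfaces, Set.mem_singleton_iff] at hμ
          apply h2.1
          rw [← hμ, Finset.insert_erase hvρ]
  refine collapses_trans hc ?_
  rw [← hdel]
  exact Collapses.step _ _ _ hel (Collapses.refl _)

lemma nonevasive_collapsible {X : SComplex V} (h : Nonevasive X) :
    ∃ w, Collapses X (point w) := by
  induction h with
  | point X v h =>
    exact ⟨v, by rw [ext' (h.trans rfl : X.faces = (point v).faces)]; exact Collapses.refl _⟩
  | step X v hv hdel hlink ihdel ihlink =>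
    obtain ⟨w, hw⟩ := ihlink
    obtain ⟨u, hu⟩ := ihdel
    exact ⟨u, collapses_trans (collapses_del_of_link hw) hu⟩

lemma nered_collapses {X Y : SComplex V} (h : NERed X Y) : Collapses X Y := by
  induction h with
  | refl X => exact Collapses.refl X
  | step X Y v hv hlink h ih =>
    obtain ⟨w, hw⟩ := nonevasive_collapsible hlink
    exact collapses_trans (collapses_del_of_link hw) ih

lemma nonevasive_of_nered {X Y : SComplex V} (h : NERed X Y) (hY : Nonevasive Y) :
    Nonevasive X := by
  induction h with
  | refl X => exact hY
  | step X Y v hv hlink h ih => exact Nonevasive.step X v hv (ih hY) hlink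

end SComplex
section Poset

open SComplex

variable {P : Type*} [Fintype P] [DecidableEq P] [PartialOrder P]

lemma oc_mem_iff (S : Set P) (σ : Finset P) :
    σ ∈ (orderComplexOn P S).faces ↔
      σ.Nonempty ∧ (∀ x ∈ σ, x ∈ S) ∧ ∀ x ∈ σ, ∀ y ∈ σ, x ≤ y ∨ y ≤ x := Iff.rfl

lemma oc_singleton_mem {S : Set P} {x : P} (hx : x ∈ S) :
    ({x} : Finset P) ∈ (orderComplexOn P S).faces := by
  rw [oc_mem_iff]
  refine ⟨Finset.singleton_nonempty x, ?_, ?_⟩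
  · intro a ha; rw [Finset.mem_singleton] at ha; exact ha ▸ hx
  · intro a ha b hb
    rw [Finset.mem_singleton] at ha hb
    subst ha; subst hb; exact Or.inl le_rfl

lemma oc_del (S : Set P) (x : P) :
    (orderComplexOn P S).del x = orderComplexOn P (S \ {x}) := by
  apply ext'
  ext σ
  simp only [del_mem_iff, oc_mem_iff, Set.mem_diff, Set.mem_singleton_iff]
  constructor
  · rintro ⟨⟨h1, h2, h3⟩, h4⟩
    exact ⟨h1, fun a ha => ⟨h2 a ha, fun he => h4 (he ▸ ha)⟩, h3⟩
  · rintro ⟨h1, h2, h3⟩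
    exact ⟨⟨h1, fun a ha => (h2 a ha).1, h3⟩, fun hx => (h2 x hx).2 rfl⟩

lemma oc_link {S : Set P} {x : P} (hx : x ∈ S) :
    (orderComplexOn P S).link x = orderComplexOn P {y ∈ S | y < x ∨ x < y} := by
  apply ext'
  ext σ
  simp only [link_mem_iff, oc_mem_iff, Set.mem_setOf_eq]
  constructor
  · rintro ⟨hxσ, hne, -, h2, h3⟩
    refine ⟨hne, fun a ha => ⟨h2 a (Finset.mem_insert_of_mem ha), ?_⟩, ?_⟩
    · have hax : a ≠ x := fun he => hxσ (he ▸ ha)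
      rcases h3 a (Finset.mem_insert_of_mem ha) x (Finset.mem_insert_self x σ) with h | h
      · exact Or.inl (lt_of_le_of_ne h hax)
      · exact Or.inr (lt_of_le_of_ne h (Ne.symm hax))
    · intro a ha b hb
      exact h3 a (Finset.mem_insert_of_mem ha) b (Finset.mem_insert_of_mem hb)
  · rintro ⟨hne, h2, h3⟩
    have hxσ : x ∉ σ := fun hmem => by
      rcases (h2 x hmem).2 with h | h <;> exact lt_irrefl x h
    refine ⟨hxσ, hne, ⟨x, Finset.mem_insert_self x σ⟩, ?_, ?_⟩
    · intro a ha
      rcases Finset.mem_insert.1 ha with rfl | ha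
      · exact hx
      · exact (h2 a ha).1
    · intro a ha b hb
      rcases Finset.mem_insert.1 ha with h1 | h1
      · rcases Finset.mem_insert.1 hb with h4 | h4
        · rw [h1, h4]; exact Or.inl le_rfl
        · rw [h1]
          rcases (h2 b h4).2 with h | h
          · exact Or.inr h.le
          · exact Or.inl h.le
      · rcases Finset.mem_insert.1 hb with h4 | h4
        · rw [h4]
          rcases (h2 a h1).2 with h | h
          · exact Or.inl h.le
          · exact Or.inr h.le
        · exact h3 a h1 b h4

lemma oc_singleton_faces (a : P) :
    (orderComplexOn P ({a} : Set P)).faces = {({a} : Finset P)} := by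
  ext σ
  constructor
  · rintro ⟨h1, h2, -⟩
    have hsub : σ ⊆ {a} := fun b hb => Finset.mem_singleton.2 (h2 b hb)
    obtain ⟨c, hc⟩ := h1
    have hca : c = a := h2 c hc
    show σ = {a}
    exact Finset.Subset.antisymm hsub (Finset.singleton_subset_iff.2 (hca ▸ hc))
  · intro h
    have hσ : σ = {a} := h
    rw [hσ]
    exact oc_singleton_mem rfl

/-- Cone lemma: a finite subposet with an element comparable to everything has
nonevasive order complex. -/
lemma cone_nonevasive : ∀ (n : ℕ) (T : Set P) (a : P), T.ncard ≤ n → a ∈ T →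
    (∀ t ∈ T, a ≤ t ∨ t ≤ a) → Nonevasive (orderComplexOn P T) := by
  intro n
  induction n with
  | zero =>
    intro T a hn ha _
    exfalso
    have : 0 < T.ncard := (Set.ncard_pos (Set.toFinite T)).2 ⟨a, ha⟩
    omega
  | succ n ih =>
    intro T a hn ha hcomp
    by_cases hT : T ⊆ {a}
    · have : T = {a} := Set.Subset.antisymm hT (by rintro y rfl; exact ha)
      subst this
      exact Nonevasive.point _ a (oc_singleton_faces a)
    · obtain ⟨y, hyT, hya⟩ : ∃ y ∈ T, y ≠ a := by
        rw [Set.not_subset] at hT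
        obtain ⟨y, h1, h2⟩ := hT
        exact ⟨y, h1, h2⟩
      have hcard : (T \ {y}).ncard ≤ n := by
        have := Set.ncard_diff_singleton_lt_of_mem hyT (Set.toFinite T)
        omega
      refine Nonevasive.step _ y (oc_singleton_mem hyT) ?_ ?_
      · rw [oc_del]
        refine ih (T \ {y}) a hcard ⟨ha, hya.symm⟩ ?_
        intro t ht; exact hcomp t ht.1
      · rw [oc_link hyT]
        have hsub : {z ∈ T | z < y ∨ y < z} ⊆ T \ {y} := by
          rintro z ⟨hz, hlt⟩
          refine ⟨hz, ?_⟩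
          rintro rfl
          rcases hlt with h | h <;> exact lt_irrefl z h
        refine ih _ a (le_trans (Set.ncard_le_ncard hsub (Set.toFinite _)) hcard) ?_ ?_
        · refine ⟨ha, ?_⟩
          rcases hcomp y hyT with h | h
          · exact Or.inl (lt_of_le_of_ne h (Ne.symm hya))
          · exact Or.inr (lt_of_le_of_ne h hya)
        · intro t ht; exact hcomp t ht.1

end Poset
section Poset2

open SComplex

variable {P : Type*} [Fintype P] [DecidableEq P] [PartialOrder P]

/-- Join lemma: if every element of `C` is comparable to (and distinct from)
every element of `D`, and `Δ(D)` is nonevasive, then `Δ(C ∪ D)` is nonevasive. -/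
lemma join_nonevasive {X : SComplex P} (hX : Nonevasive X) :
    ∀ (C D : Set P), X = orderComplexOn P D → (∀ c ∈ C, c ∉ D) →
    (∀ c ∈ C, ∀ d ∈ D, c ≤ d ∨ d ≤ c) → Nonevasive (orderComplexOn P (C ∪ D)) := by
  induction hX with
  | point X v h =>
    intro C D hXD hdisj hcross
    subst hXD
    -- D = {v}
    have hvD : v ∈ D := by
      have : ({v} : Finset P) ∈ (orderComplexOn P D).faces := by rw [h]; rfl
      exact ((oc_mem_iff D _).1 this).2.1 v (Finset.mem_singleton_self v)
    have hD : D = {v} := by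
      apply Set.Subset.antisymm
      · intro w hw
        have : ({w} : Finset P) ∈ (orderComplexOn P D).faces := oc_singleton_mem hw
        rw [h] at this
        have : ({w} : Finset P) = {v} := this
        have := Finset.mem_singleton.1 (this ▸ Finset.mem_singleton_self w)
        exact this ▸ rfl
      · rintro w rfl; exact hvD
    subst hD
    refine cone_nonevasive (C ∪ {v}).ncard _ v le_rfl (Or.inr rfl) ?_
    rintro t (ht | rfl)
    · rcases hcross t ht v rfl with h' | h'
      · exact Or.inr h'
      · exact Or.inl h'
    · exact Or.inl le_rfl
  | step X v hv hdel hlink ihdel ihlink =>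
    intro C D hXD hdisj hcross
    subst hXD
    have hvD : v ∈ D := ((oc_mem_iff D _).1 hv).2.1 v (Finset.mem_singleton_self v)
    have hvC : v ∉ C := fun hc => hdisj v hc hvD
    have hDel : Nonevasive (orderComplexOn P (C ∪ (D \ {v}))) := by
      refine ihdel C (D \ {v}) (oc_del D v) ?_ ?_
      · intro c hc hcd; exact hdisj c hc hcd.1
      · intro c hc d hd; exact hcross c hc d hd.1
    have hLink : Nonevasive (orderComplexOn P (C ∪ {y ∈ D | y < v ∨ v < y})) := by
      refine ihlink C _ (oc_link hvD) ?_ ?_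
      · intro c hc hcd; exact hdisj c hc hcd.1
      · intro c hc d hd; exact hcross c hc d hd.1
    refine Nonevasive.step _ v (oc_singleton_mem (Set.mem_union_right C hvD)) ?_ ?_
    · rw [oc_del]
      have : (C ∪ D) \ {v} = C ∪ (D \ {v}) := by
        ext z
        simp only [Set.mem_diff, Set.mem_union, Set.mem_singleton_iff]
        constructor
        · rintro ⟨hz | hz, hne⟩
          · exact Or.inl hz
          · exact Or.inr ⟨hz, hne⟩
        · rintro (hz | ⟨hz, hne⟩)
          · exact ⟨Or.inl hz, fun he => hvC (he ▸ hz)⟩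
          · exact ⟨Or.inr hz, hne⟩
      rw [this]
      exact hDel
    · rw [oc_link (Set.mem_union_right C hvD)]
      have : {y ∈ C ∪ D | y < v ∨ v < y} = C ∪ {y ∈ D | y < v ∨ v < y} := by
        ext z
        simp only [Set.mem_setOf_eq, Set.mem_union]
        constructor
        · rintro ⟨hz | hz, hlt⟩
          · exact Or.inl hz
          · exact Or.inr ⟨hz, hlt⟩
        · rintro (hz | ⟨hz, hlt⟩)
          · refine ⟨Or.inl hz, ?_⟩
            have hne : z ≠ v := fun he => hvC (he ▸ hz)
            rcases hcross z hz v hvD with h' | h'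
            · exact Or.inl (lt_of_le_of_ne h' hne)
            · exact Or.inr (lt_of_le_of_ne h' (Ne.symm hne))
          · exact ⟨Or.inr hz, hlt⟩
      rw [this]
      exact hLink

end Poset2
section Poset3

open SComplex

variable {P : Type*} [Fintype P] [DecidableEq P] [PartialOrder P]

/-- Main induction: for an idempotent monotone map `ψ` on a subposet `S` with
fixed points contained in `Q ⊆ S`, `Δ(S)` NE-reduces to `Δ(Q)`. -/
lemma nered_aux : ∀ (n : ℕ) (S Q : Set P) (ψ : P → P), S.ncard ≤ n → Q ⊆ S →
    (∀ a ∈ S, ∀ b ∈ S, a ≤ b → ψ a ≤ ψ b) →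
    (∀ a ∈ S, a ≤ ψ a ∨ ψ a ≤ a) →
    (∀ a ∈ S, ψ a ∈ S) →
    (∀ a ∈ S, ψ (ψ a) = ψ a) →
    (∀ a ∈ S, ψ a = a → a ∈ Q) →
    NERed (orderComplexOn P S) (orderComplexOn P Q) := by
  intro n
  induction n with
  | zero =>
    intro S Q ψ hn hQS h1 h2 h3 h4 h6
    have hS : S = ∅ := by
      rcases Set.eq_empty_or_nonempty S with h | h
      · exact h
      · exact absurd ((Set.ncard_pos (Set.toFinite S)).2 h) (by omega)
    have hQ : Q = ∅ := Set.eq_empty_of_subset_empty (hS ▸ hQS)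
    rw [hS, hQ]
    exact NERed.refl _
  | succ n ih =>
    intro S Q ψ hn hQS h1 h2 h3 h4 h6
    by_cases hSQ : S ⊆ Q
    · rw [Set.Subset.antisymm hSQ hQS]
      exact NERed.refl _
    · obtain ⟨x, hxS, hxQ⟩ : ∃ x ∈ S, x ∉ Q := by
        rw [Set.not_subset] at hSQ
        obtain ⟨x, h', h''⟩ := hSQ
        exact ⟨x, h', h''⟩
      have hψx : ψ x ≠ x := fun he => hxQ (h6 x hxS he)
      have hψxS : ψ x ∈ S := h3 x hxS
      have hcard_del : (S \ {x}).ncard ≤ n := by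
        have := Set.ncard_diff_singleton_lt_of_mem hxS (Set.toFinite S)
        omega
      -- deletion recursion
      have hdel : NERed ((orderComplexOn P S).del x) (orderComplexOn P Q) := by
        rw [oc_del]
        refine ih (S \ {x}) Q ψ hcard_del ?_ ?_ ?_ ?_ ?_ ?_
        · intro q hq; exact ⟨hQS hq, fun he => hxQ (he ▸ hq)⟩
        · intro a ha b hb hab; exact h1 a ha.1 b hb.1 hab
        · intro a ha; exact h2 a ha.1
        · intro a ha
          refine ⟨h3 a ha.1, fun he => ?_⟩
          have : ψ a ∈ Q := h6 (ψ a) (h3 a ha.1) (h4 a ha.1)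
          exact hxQ (he ▸ this)
        · intro a ha; exact h4 a ha.1
        · intro a ha he; exact h6 a ha.1 he
      -- link nonevasiveness: case split on direction
      have hlink : Nonevasive ((orderComplexOn P S).link x) := by
        rw [oc_link hxS]
        rcases h2 x hxS with hle | hle
        · -- x < ψ x ; the upper part D = {y ∈ S | x < y}
          have hxlt : x < ψ x := lt_of_le_of_ne hle (Ne.symm hψx)
          set C : Set P := {y ∈ S | y < x} with hC
          set D : Set P := {y ∈ S | x < y} with hD
          have hCD : {y ∈ S | y < x ∨ x < y} = C ∪ D := by
            ext z
            simp only [Set.mem_setOf_eq, Set.mem_union, hC, hD]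
            tauto
          rw [hCD]
          have hDsub : D ⊆ S \ {x} := by
            rintro z ⟨hz, hlt⟩
            exact ⟨hz, fun he => lt_irrefl x (he ▸ hlt)⟩
          have hψD : ∀ a ∈ D, ψ a ∈ D := by
            rintro a ⟨haS, hax⟩
            exact ⟨h3 a haS, lt_of_lt_of_le hxlt (h1 x hxS a haS hax.le)⟩
          have hNE_D : Nonevasive (orderComplexOn P D) := by
            have hred : NERed (orderComplexOn P D) (orderComplexOn P {z ∈ D | ψ z = z}) := by
              refine ih D {z ∈ D | ψ z = z} ψ
                (le_trans (Set.ncard_le_ncard hDsub (Set.toFinite _)) hcard_del)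
                (fun z hz => hz.1) ?_ ?_ hψD ?_ ?_
              · intro a ha b hb hab; exact h1 a ha.1 b hb.1 hab
              · intro a ha; exact h2 a ha.1
              · intro a ha; exact h4 a ha.1
              · intro a ha he; exact ⟨ha, he⟩
            refine nonevasive_of_nered hred ?_
            refine cone_nonevasive _ _ (ψ x) le_rfl ?_ ?_
            · exact ⟨⟨hψxS, hxlt⟩, h4 x hxS⟩
            · rintro t ⟨⟨htS, hxt⟩, htfix⟩
              have := h1 x hxS t htS hxt.le
              rw [htfix] at this
              exact Or.inl this
          refine join_nonevasive hNE_D C D rfl ?_ ?_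
          · rintro c ⟨hcS, hcx⟩ ⟨hdS, hxd⟩
            exact lt_irrefl x (lt_trans hxd hcx)
          · rintro c ⟨hcS, hcx⟩ d ⟨hdS, hxd⟩
            exact Or.inl (le_of_lt (lt_trans hcx hxd))
        · -- ψ x < x ; the lower part D = {y ∈ S | y < x}
          have hxlt : ψ x < x := lt_of_le_of_ne hle hψx
          set C : Set P := {y ∈ S | x < y} with hC
          set D : Set P := {y ∈ S | y < x} with hD
          have hCD : {y ∈ S | y < x ∨ x < y} = C ∪ D := by
            ext z
            simp only [Set.mem_setOf_eq, Set.mem_union, hC, hD]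
            tauto
          rw [hCD]
          have hDsub : D ⊆ S \ {x} := by
            rintro z ⟨hz, hlt⟩
            exact ⟨hz, fun he => lt_irrefl x (he ▸ hlt)⟩
          have hψD : ∀ a ∈ D, ψ a ∈ D := by
            rintro a ⟨haS, hax⟩
            exact ⟨h3 a haS, lt_of_le_of_lt (h1 a haS x hxS hax.le) hxlt⟩
          have hNE_D : Nonevasive (orderComplexOn P D) := by
            have hred : NERed (orderComplexOn P D) (orderComplexOn P {z ∈ D | ψ z = z}) := by
              refine ih D {z ∈ D | ψ z = z} ψ
                (le_trans (Set.ncard_le_ncard hDsub (Set.toFinite _)) hcard_del)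
                (fun z hz => hz.1) ?_ ?_ hψD ?_ ?_
              · intro a ha b hb hab; exact h1 a ha.1 b hb.1 hab
              · intro a ha; exact h2 a ha.1
              · intro a ha; exact h4 a ha.1
              · intro a ha he; exact ⟨ha, he⟩
            refine nonevasive_of_nered hred ?_
            refine cone_nonevasive _ _ (ψ x) le_rfl ?_ ?_
            · exact ⟨⟨hψxS, hxlt⟩, h4 x hxS⟩
            · rintro t ⟨⟨htS, hxt⟩, htfix⟩
              have := h1 t htS x hxS hxt.le
              rw [htfix] at this
              exact Or.inr this
          refine join_nonevasive hNE_D C D rfl ?_ ?_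
          · rintro c ⟨hcS, hcx⟩ ⟨hdS, hxd⟩
            exact lt_irrefl x (lt_trans hcx hxd)
          · rintro c ⟨hcS, hcx⟩ d ⟨hdS, hxd⟩
            exact Or.inr (le_of_lt (lt_trans hxd hcx))
      exact NERed.step _ _ x (oc_singleton_mem hxS) hlink hdel

end Poset3
section Final

open SComplex

variable {P : Type*} [Fintype P] [DecidableEq P] [PartialOrder P]

lemma iterate_seq_mono {φ : P → P} (hm : Monotone φ) {x : P} (hx : x ≤ φ x) :
    Monotone (fun k => φ^[k] x) := by
  apply monotone_nat_of_le_succ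
  intro k
  rw [Function.iterate_succ_apply]
  exact hm.iterate k hx

lemma iterate_seq_anti {φ : P → P} (hm : Monotone φ) {x : P} (hx : φ x ≤ x) :
    Antitone (fun k => φ^[k] x) := by
  apply antitone_nat_of_succ_le
  intro k
  rw [Function.iterate_succ_apply]
  exact hm.iterate k hx

/-- For a monotone poset map, the `card P`-th iterate lands in the fixed point set. -/
lemma iterate_card_fixed (φ : P → P) (h : IsMonotonePosetMap φ) (x : P) :
    φ (φ^[Fintype.card P] x) = φ^[Fintype.card P] x := by
  set K := Fintype.card P with hK
  have hinj : ¬ Function.Injective (fun k : Fin (K + 1) => φ^[(k : ℕ)] x) := by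
    intro hinj
    have := Fintype.card_le_of_injective _ hinj
    simp [hK] at this
  rw [Function.not_injective_iff] at hinj
  obtain ⟨i, j, hij, hne⟩ := hinj
  -- wlog i < j
  obtain ⟨i, j, hij, hlt, hjK⟩ : ∃ i j : ℕ, φ^[i] x = φ^[j] x ∧ i < j ∧ j ≤ K := by
    rcases lt_or_gt_of_ne hne with h' | h'
    · exact ⟨i, j, hij, h', j.is_le⟩
    · exact ⟨j, i, hij.symm, h', i.is_le⟩
  have hstep : φ^[i + 1] x = φ^[i] x := by
    rcases h.2 x with hx | hx
    · have hm := iterate_seq_mono h.1 hx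
      exact le_antisymm (hij ▸ hm (by omega : i + 1 ≤ j)) (hm (by omega : i ≤ i + 1))
    · have hm := iterate_seq_anti h.1 hx
      exact le_antisymm (hm (by omega : i ≤ i + 1)) (hij ▸ hm (by omega : i + 1 ≤ j))
  have hfix : φ (φ^[i] x) = φ^[i] x := by
    rw [← Function.iterate_succ_apply' φ i x]
    exact hstep
  have hiK : i ≤ K := by omega
  have hall : ∀ m, φ^[i + m] x = φ^[i] x := by
    intro m
    induction m with
    | zero => rfl
    | succ m ihm =>
      have hm1 : i + (m + 1) = (i + m) + 1 := by omega
      rw [hm1, Function.iterate_succ_apply', ihm, hfix]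
  have : φ^[K] x = φ^[i] x := by
    have := hall (K - i)
    rwa [Nat.add_sub_cancel' hiK] at this
  rw [this, hfix]

end Final

/-- For a finite poset `P`, a monotone map `φ : P → P`, and `Fix φ ⊆ Q ⊆ P`,
the order complex `Δ(P)` NE-reduces to `Δ(Q)`; in particular `Δ(P)` collapses
onto `Δ(Q)`. -/
theorem nered_orderComplex {P : Type*} [Fintype P] [DecidableEq P]
    [PartialOrder P] (φ : P → P) (h : IsMonotonePosetMap φ)
    (Q : Set P) (hfix : {x : P | φ x = x} ⊆ Q) :
    SComplex.NERed (orderComplexOn P Set.univ) (orderComplexOn P Q) ∧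
    SComplex.Collapses (orderComplexOn P Set.univ) (orderComplexOn P Q) := by
  set K := Fintype.card P with hK
  set ψ : P → P := fun x => φ^[K] x with hψ
  have hψfix : ∀ x, φ (ψ x) = ψ x := fun x => iterate_card_fixed φ h x
  have hred : SComplex.NERed (orderComplexOn P Set.univ) (orderComplexOn P Q) := by
    refine nered_aux (Set.univ : Set P).ncard Set.univ Q ψ le_rfl (Set.subset_univ Q)
      ?_ ?_ (fun a _ => Set.mem_univ _) ?_ ?_
    · intro a _ b _ hab
      exact (h.1.iterate K) hab
    · intro a _
      rcases h.2 a with ha | ha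
      · exact Or.inl ((iterate_seq_mono h.1 ha) (Nat.zero_le K))
      · exact Or.inr ((iterate_seq_anti h.1 ha) (Nat.zero_le K))
    · intro a _
      exact Function.iterate_fixed (hψfix a) K
    · intro a _ hfa
      apply hfix
      have := hψfix a
      rw [hfa] at this
      exact this
  exact ⟨hred, SComplex.nered_collapses hred⟩
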